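/- Let a be a real number with -1 < a < -1/2, and let u, v be real numbers with u ≠ v. Then ∫_ℝ (u-x)_+^a (v-x)_+^a dx = B(a+1, -2a-1) · |u-v|^{2a+1}, where B denotes the Beta function and (t)_+^a denotes t^a when t > 0 and 0 otherwise. -/

import Mathlib

/-!
Translating by `u` and scaling by `v - u` reduces the integral to
`∫₀^∞ s^a (1 + s)^a ds`, which is the Beta integral of the second kind: the substitution
`s = t / (1 - t)` turns it into `∫₀¹ t^a (1 - t)^(-2a-2) dt = B(a + 1, -2a - 1)`.
-/

open MeasureTheory Set

/-- The Beta function `B(x,y) = ∫_0^1 t^{x-1} (1-t)^{y-1} dt`. -/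
noncomputable def betaFn (x y : ℝ) : ℝ :=
  ∫ t in Set.Ioo (0:ℝ) 1, t ^ (x - 1) * (1 - t) ^ (y - 1)

/-- `(t)_+^a`, equal to `t^a` when `t > 0` and to `0` otherwise. -/
noncomputable def posPow (t a : ℝ) : ℝ := if 0 < t then t ^ a else 0

lemma posPow_mul_left {d : ℝ} (hd : 0 < d) (x a : ℝ) :
    posPow (d * x) a = d ^ a * posPow x a := by
  by_cases hx : 0 < x
  · simp [posPow, hx, mul_pos hd hx, Real.mul_rpow hd.le hx.le]
  · have hdx : ¬ 0 < d * x := not_lt.2 (mul_nonpos_of_nonneg_of_nonpos hd.le (not_lt.1 hx))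
    simp [posPow, hx, hdx]

lemma image_div_one_sub_Ioo : (fun t : ℝ => t / (1 - t)) '' Ioo 0 1 = Ioi 0 := by
  ext s
  constructor
  · rintro ⟨t, ⟨ht0, ht1⟩, rfl⟩
    exact div_pos ht0 (by linarith)
  · intro (hs : 0 < s)
    refine ⟨s / (1 + s), ⟨by positivity, (div_lt_one (by linarith)).2 (by linarith)⟩, ?_⟩
    field_simp
    ring

lemma injOn_div_one_sub_Ioo : InjOn (fun t : ℝ => t / (1 - t)) (Ioo 0 1) := by
  intro s ⟨_, hs1⟩ t ⟨_, ht1⟩ hst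
  rw [div_eq_div_iff (by linarith) (by linarith)] at hst
  linarith

lemma hasDerivAt_div_one_sub {t : ℝ} (ht : t ≠ 1) :
    HasDerivAt (fun t : ℝ => t / (1 - t)) (1 / (1 - t) ^ 2) t :=
  ((hasDerivAt_id' t).fun_div ((hasDerivAt_const t (1 : ℝ)).fun_sub (hasDerivAt_id' t))
    (sub_ne_zero.2 ht.symm)).congr_deriv (by ring)

lemma betaFn_eq_integral_Ioi (x y : ℝ) :
    betaFn x y = ∫ s in Ioi 0, s ^ (x - 1) * (1 + s) ^ (-(x + y)) := by
  rw [← image_div_one_sub_Ioo, integral_image_eq_integral_abs_deriv_smul measurableSet_Ioo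
    (fun t ht => (hasDerivAt_div_one_sub ht.2.ne).hasDerivWithinAt) injOn_div_one_sub_Ioo]
  refine setIntegral_congr_fun measurableSet_Ioo fun t ⟨ht0, ht1⟩ => ?_
  have h1t : 0 < 1 - t := by linarith
  have hs : t / (1 - t) = t * (1 - t)⁻¹ := div_eq_mul_inv _ _
  have h1s : 1 + t / (1 - t) = (1 - t)⁻¹ := by field_simp; ring
  have hderiv : 1 / (1 - t) ^ 2 = (1 - t) ^ (-(2 : ℝ)) := by
    rw [Real.rpow_neg h1t.le, Real.rpow_two, one_div]
  simp only [smul_eq_mul]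
  rw [h1s, hs, Real.mul_rpow ht0.le (by positivity), Real.inv_rpow h1t.le,
    Real.inv_rpow h1t.le, ← Real.rpow_neg h1t.le, ← Real.rpow_neg h1t.le, neg_neg,
    abs_of_pos (by positivity), hderiv]
  have hsplit : (1 - t) ^ (y - 1) =
      (1 - t) ^ (-(2 : ℝ)) * (1 - t) ^ (-(x - 1)) * (1 - t) ^ (x + y) := by
    rw [← Real.rpow_add h1t, ← Real.rpow_add h1t]
    ring_nf
  rw [hsplit]
  ring

lemma integral_posPow_mul_posPow_one_add (a : ℝ) :
    ∫ x : ℝ, posPow x a * posPow (1 + x) a = betaFn (a + 1) (-2 * a - 1) := by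
  have hind : (fun x : ℝ => posPow x a * posPow (1 + x) a)
      = (Ioi (0 : ℝ)).indicator (fun x => x ^ a * (1 + x) ^ a) := by
    funext x
    by_cases hx : 0 < x
    · have h1x : 0 < 1 + x := by linarith
      simp [posPow, hx, h1x]
    · simp [posPow, hx]
  rw [hind, integral_indicator measurableSet_Ioi, betaFn_eq_integral_Ioi]
  ring_nf

lemma integral_posPow_sub_mul_posPow_sub_of_lt (a : ℝ) {u v : ℝ} (huv : u < v) :
    ∫ x : ℝ, posPow (u - x) a * posPow (v - x) a =
      betaFn (a + 1) (-2 * a - 1) * (v - u) ^ (2 * a + 1) := by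
  set d := v - u
  have hd : 0 < d := sub_pos.2 huv
  set F : ℝ → ℝ := fun x => posPow (u - x) a * posPow (v - x) a
  have hscale : ∀ x, F (u - d * x) = d ^ a * d ^ a * (posPow x a * posPow (1 + x) a) := by
    intro x
    have e1 : u - (u - d * x) = d * x := by ring
    have e2 : v - (u - d * x) = d * (1 + x) := by ring
    simp only [F, e1, e2, posPow_mul_left hd]
    ring
  have hsubst : ∫ x, F (u - d * x) = d⁻¹ * ∫ x, F x := by
    rw [Measure.integral_comp_mul_left (fun y => F (u - y)) d, integral_sub_left_eq_self,
      abs_of_pos (inv_pos.2 hd), smul_eq_mul]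
  simp only [hscale, integral_const_mul, integral_posPow_mul_posPow_one_add] at hsubst
  rw [eq_inv_mul_iff_mul_eq₀ hd.ne'] at hsubst
  rw [← hsubst, show 2 * a + 1 = a + a + 1 by ring, Real.rpow_add hd, Real.rpow_add hd,
    Real.rpow_one]
  ring

theorem stmt_2_general (a u v : ℝ) (huv : u ≠ v) :
    (∫ x : ℝ, posPow (u - x) a * posPow (v - x) a) =
      betaFn (a + 1) (-2 * a - 1) * |u - v| ^ (2 * a + 1) := by
  rcases huv.lt_or_gt with h | h
  · rw [integral_posPow_sub_mul_posPow_sub_of_lt a h, abs_sub_comm, abs_of_pos (sub_pos.2 h)]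
  · simp_rw [mul_comm (posPow (u - _) a)]
    rw [integral_posPow_sub_mul_posPow_sub_of_lt a h, abs_of_pos (sub_pos.2 h)]

theorem stmt_2 (a u v : ℝ) (ha : -1 < a) (ha' : a < -1/2) (huv : u ≠ v) :
    (∫ x : ℝ, posPow (u - x) a * posPow (v - x) a) =
      betaFn (a + 1) (-2 * a - 1) * |u - v| ^ (2 * a + 1) :=
  stmt_2_general a u v huv
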